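/- arXiv:2509.05299 — 10 statements merged into one kernel-verified Lean document; each statement's English description precedes it below -/
import Mathlib

section
/- Let E be a set and let c, s, t be preclosure operators on E. Then the convolution product c*s is again a preclosure operator on E, and the convolution product is commutative (c*s = s*c) and associative ((c*s)*t = c*(s*t)). -/
/-- A preclosure operator on a set `E`: `A ⊆ c A` and `c` is monotone. -/
def IsPreclosure {E : Type*} (c : Set E → Set E) : Prop :=
  (∀ A : Set E, A ⊆ c A) ∧ ∀ ⦃A B : Set E⦄, A ⊆ B → c A ⊆ c B

/-- The convolution product of two preclosure operators. -/
def cnv {E : Type*} (c s : Set E → Set E) : Set E → Set E :=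
  fun A => ⋂ B : Set E, c (A ∩ B) ∪ s (A \ B)

lemma mem_cnv {E : Type*} (c s : Set E → Set E) (A : Set E) (x : E) :
    x ∈ cnv c s A ↔ ∀ B : Set E, x ∈ c (A ∩ B) ∨ x ∈ s (A \ B) := by
  simp [cnv, Set.mem_iInter, Set.mem_union]

lemma cnv_comm_le {E : Type*} (c s : Set E → Set E) (A : Set E) (x : E)
    (h : x ∈ cnv c s A) : x ∈ cnv s c A := by
  rw [mem_cnv] at h ⊢
  intro B
  have h' := h Bᶜ
  rw [Set.diff_compl, show A ∩ Bᶜ = A \ B from (Set.diff_eq A B).symm] at h'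
  tauto

/-- The convolution product of preclosure operators is a preclosure operator, and
the convolution product is commutative and associative. -/
theorem convolution_preclosure_comm_assoc {E : Type*} (c s t : Set E → Set E)
    (hc : IsPreclosure c) (hs : IsPreclosure s) (ht : IsPreclosure t) :
    IsPreclosure (cnv c s) ∧ cnv c s = cnv s c ∧
      cnv (cnv c s) t = cnv c (cnv s t) := by
  refine ⟨⟨fun A x hx => ?_, fun A B hAB x hx => ?_⟩, ?_, ?_⟩
  · rw [mem_cnv]
    intro B
    by_cases hB : x ∈ B
    · exact Or.inl (hc.1 _ ⟨hx, hB⟩)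
    · exact Or.inr (hs.1 _ ⟨hx, hB⟩)
  · rw [mem_cnv] at hx ⊢
    intro B'
    rcases hx B' with h | h
    · exact Or.inl (hc.2 (Set.inter_subset_inter_left _ hAB) h)
    · exact Or.inr (hs.2 (Set.diff_subset_diff_left hAB) h)
  · funext A
    exact Set.Subset.antisymm (fun x hx => cnv_comm_le c s A x hx)
      (fun x hx => cnv_comm_le s c A x hx)
  · funext A
    ext x
    simp only [mem_cnv]
    constructor
    · intro h B
      rw [or_iff_not_imp_left]
      intro hnc B'
      rcases h (B ∪ B') with h1 | h1
      · rcases h1 B with h2 | h2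
        · rw [show (A ∩ (B ∪ B')) ∩ B = A ∩ B from by ext y; simp; tauto] at h2
          exact absurd h2 hnc
        · rw [show (A ∩ (B ∪ B')) \ B = (A \ B) ∩ B' from by ext y; simp; tauto] at h2
          exact Or.inl h2
      · exact Or.inr (ht.2 (by intro y hy; exact ⟨⟨hy.1, fun h => hy.2 (Or.inl h)⟩,
          fun h => hy.2 (Or.inr h)⟩) h1)
    · intro h B
      rw [or_iff_not_imp_right]
      intro hnt B'
      rcases h (B ∩ B') with h1 | h1
      · exact Or.inl (by rwa [← Set.inter_assoc] at h1)
      · rcases h1 B with h2 | h2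
        · rw [show (A \ (B ∩ B')) ∩ B = (A ∩ B) \ B' from by ext y; simp; tauto] at h2
          exact Or.inr h2
        · rw [show (A \ (B ∩ B')) \ B = A \ B from by ext y; simp; tauto] at h2
          exact absurd h2 hnt
end

section
/- If c and s are closure operators on a set E, then their convolution c*s is a closure operator, i.e. (c*s)((c*s)(A)) = (c*s)(A) for every subset A of E. -/
lemma cnv_extensive {E : Type*} (c s : Set E → Set E)
    (hc : IsPreclosure c) (hs : IsPreclosure s) (A : Set E) : A ⊆ cnv c s A := by
  intro x hx
  refine Set.mem_iInter.2 fun B => ?_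
  by_cases hB : x ∈ B
  · exact Or.inl (hc.1 _ ⟨hx, hB⟩)
  · exact Or.inr (hs.1 _ ⟨hx, hB⟩)

/-- If `c` and `s` are closure operators (idempotent preclosure operators), then their
convolution `c * s` is a closure operator, i.e. it is an idempotent preclosure operator. -/
theorem convolution_of_closure_isClosure {E : Type*} (c s : Set E → Set E)
    (hc : IsPreclosure c) (hcid : ∀ A : Set E, c (c A) = c A)
    (hs : IsPreclosure s) (hsid : ∀ A : Set E, s (s A) = s A) :
    IsPreclosure (cnv c s) ∧ ∀ A : Set E, cnv c s (cnv c s A) = cnv c s A := by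
  have hpre : IsPreclosure (cnv c s) := by
    refine ⟨cnv_extensive c s hc hs, fun A B hAB => ?_⟩
    refine Set.iInter_mono fun D => Set.union_subset_union ?_ ?_
    · exact hc.2 (Set.inter_subset_inter_left _ hAB)
    · exact hs.2 (Set.diff_subset_diff_left hAB)
  refine ⟨hpre, fun A => ?_⟩
  apply Set.Subset.antisymm
  · intro x hx
    refine Set.mem_iInter.2 fun B => ?_
    have key : cnv c s A ⊆ c (A ∩ B) ∪ s (A \ B) := Set.iInter_subset _ B
    have hx' : x ∈ c (cnv c s A ∩ c (A ∩ B)) ∪ s (cnv c s A \ c (A ∩ B)) :=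
      Set.mem_iInter.1 hx (c (A ∩ B))
    rcases hx' with h | h
    · left
      have : c (cnv c s A ∩ c (A ∩ B)) ⊆ c (c (A ∩ B)) := hc.2 Set.inter_subset_right
      rw [hcid] at this
      exact this h
    · right
      have hsub : cnv c s A \ c (A ∩ B) ⊆ s (A \ B) := by
        rintro y ⟨hy1, hy2⟩
        rcases key hy1 with h' | h'
        · exact absurd h' hy2
        · exact h'
      have : s (cnv c s A \ c (A ∩ B)) ⊆ s (s (A \ B)) := hs.2 hsub
      rw [hsid] at this
      exact this h
  · exact cnv_extensive c s hc hs _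
end

section
/- Let (E, ≤, c) be an enriched qoset. The following are equivalent: (1) c separates points; (2) c(↓x) = ↓x for all x ∈ E; (3) x ∉ c(↓y) whenever x ≰ y; (4) c(A) ⊆ (A↑)↓ for all subsets A. Moreover, if these conditions hold then for all x, y ∈ E one has x ≤ y if and only if x ∈ c({y}). -/
/-- The lower closure `↓A` of a subset of a qoset. -/
def dcl {E : Type*} [Preorder E] (A : Set E) : Set E := {x | ∃ a ∈ A, x ≤ a}

/-- `c` separates points: whenever `¬ x ≤ y`, some `c`-closed set contains `y` but not `x`. -/
def SepPoints {E : Type*} [Preorder E] (c : Set E → Set E) : Prop :=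
  ∀ x y : E, ¬ x ≤ y → ∃ V : Set E, c V = V ∧ y ∈ V ∧ x ∉ V

/-- For an enriched qoset `(E, ≤, c)` (a qoset with a right-absorbing preclosure operator),
the following are equivalent: (1) `c` separates points; (2) `c(↓x) = ↓x` for all `x`;
(3) `x ∉ c(↓y)` whenever `¬ x ≤ y`; (4) `c A ⊆ (A↑)↓` for all `A`.
Moreover, if these hold, then `x ≤ y ↔ x ∈ c {y}`. -/
theorem sepPoints_tfae {E : Type*} [Preorder E] (c : Set E → Set E)
    (hc : IsPreclosure c) (habs : ∀ A : Set E, dcl (c A) = c A) :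
    [SepPoints c,
      ∀ x : E, c (Set.Iic x) = Set.Iic x,
      ∀ x y : E, ¬ x ≤ y → x ∉ c (Set.Iic y),
      ∀ A : Set E, c A ⊆ lowerBounds (upperBounds A)].TFAE ∧
    (SepPoints c → ∀ x y : E, x ≤ y ↔ x ∈ c {y}) := by
  have h12 : SepPoints c → ∀ x : E, c (Set.Iic x) = Set.Iic x := by
    intro hsep x
    refine Set.Subset.antisymm ?_ (hc.1 _)
    intro z hz
    by_contra hzx
    obtain ⟨V, hV, hxV, hzV⟩ := hsep z x hzx
    have hsub : Set.Iic x ⊆ V := by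
      intro w hw
      have : w ∈ dcl (c V) := ⟨x, by rw [hV]; exact hxV, hw⟩
      rwa [habs, hV] at this
    exact hzV (hV ▸ hc.2 hsub hz)
  have h23 : (∀ x : E, c (Set.Iic x) = Set.Iic x) →
      ∀ x y : E, ¬ x ≤ y → x ∉ c (Set.Iic y) := by
    intro h2 x y hxy hx
    rw [h2 y] at hx; exact hxy hx
  have h34 : (∀ x y : E, ¬ x ≤ y → x ∉ c (Set.Iic y)) →
      ∀ A : Set E, c A ⊆ lowerBounds (upperBounds A) := by
    intro h3 A z hz u hu
    by_contra hzu
    exact h3 z u hzu (hc.2 (fun a ha => hu ha) hz)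
  have h42 : (∀ A : Set E, c A ⊆ lowerBounds (upperBounds A)) →
      ∀ x : E, c (Set.Iic x) = Set.Iic x := by
    intro h4 x
    refine Set.Subset.antisymm ?_ (hc.1 _)
    intro z hz
    exact h4 _ hz (fun a ha => ha)
  have h21 : (∀ x : E, c (Set.Iic x) = Set.Iic x) → SepPoints c := by
    intro h2 x y hxy
    exact ⟨Set.Iic y, h2 y, le_rfl, hxy⟩
  constructor
  · tfae_have 1 → 2 := h12
    tfae_have 2 → 3 := h23
    tfae_have 3 → 4 := h34
    tfae_have 4 → 2 := h42
    tfae_have 2 → 1 := h21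
    tfae_finish
  · intro hsep x y
    constructor
    · intro hxy
      have : x ∈ dcl (c {y}) := ⟨y, hc.1 _ rfl, hxy⟩
      rwa [habs] at this
    · intro hx
      have : x ∈ c (Set.Iic y) := hc.2 (by simp) hx
      rwa [h12 hsep y] at this
end

section
/- Let (E, ≤, c) be an enriched qoset. Then c↑(A) = ⋃_{B ⊆ A} (c(B) ∩ B↑) for every subset A of E. Moreover, if c separates points, then c↑(A) = ⋃ {B^∨ : B ⊆ A and B has a c-sup} for every subset A of E. -/
/-- The upper closure `↑A` of a subset of a qoset. -/
def ucl {E : Type*} [Preorder E] (A : Set E) : Set E := {x | ∃ a ∈ A, a ≤ x}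

/-- Inner representation of the convolution `c↑ = c * ↑·` in an enriched qoset:
`c↑(A) = ⋃_{B ⊆ A} c(B) ∩ B↑`, and if `c` separates points then
`c↑(A)` is the union of the sets of suprema of the subsets `B ⊆ A` having a `c`-sup. -/
theorem cnv_up_inner_representation {E : Type*} [Preorder E] (c : Set E → Set E)
    (hc : IsPreclosure c) (habs : ∀ A : Set E, dcl (c A) = c A) :
    (∀ A : Set E, cnv c ucl A = ⋃ (B : Set E) (_ : B ⊆ A), (c B ∩ upperBounds B)) ∧
    (SepPoints c → ∀ A : Set E,
      cnv c ucl A =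
        ⋃ (B : Set E) (_ : B ⊆ A ∧ ∃ s : E, IsLUB B s ∧ s ∈ c B), {x : E | IsLUB B x}) := by
  have key : ∀ A : Set E, cnv c ucl A = ⋃ (B : Set E) (_ : B ⊆ A), (c B ∩ upperBounds B) := by
    intro A
    ext x
    simp only [cnv, Set.mem_iUnion, Set.mem_iInter, Set.mem_inter_iff, Set.mem_union]
    constructor
    · intro h
      refine ⟨{a ∈ A | a ≤ x}, fun a ha => ha.1, ?_, fun a ha => ha.2⟩
      rcases h ({a ∈ A | a ≤ x} ∪ Aᶜ) with h1 | h1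
      · refine hc.2 ?_ h1
        rintro a ⟨haA, h2 | h2⟩
        · exact h2
        · exact absurd haA h2
      · exfalso
        obtain ⟨a, ⟨haA, hanot⟩, hax⟩ := h1
        exact hanot (Or.inl ⟨haA, hax⟩)
    · rintro ⟨B, hBA, hxcB, hxub⟩ C
      by_cases hBC : B ⊆ C
      · left; exact hc.2 (fun b hb => Set.mem_inter (hBA hb) (hBC hb)) hxcB
      · right
        obtain ⟨b, hbB, hbC⟩ := Set.not_subset.1 hBC
        exact ⟨b, ⟨hBA hbB, hbC⟩, hxub hbB⟩
  refine ⟨key, ?_⟩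
  intro hsep A
  rw [key A]
  ext x
  simp only [Set.mem_iUnion, Set.mem_inter_iff, Set.mem_setOf_eq]
  constructor
  · rintro ⟨B, hBA, hxcB, hxub⟩
    have hlub : IsLUB B x := by
      refine ⟨hxub, ?_⟩
      intro y hy
      by_contra hxy
      obtain ⟨V, hV, hyV, hxV⟩ := hsep x y hxy
      have hVdown : ∀ z w, w ∈ V → z ≤ w → z ∈ V := by
        intro z w hw hzw
        have h1 : z ∈ dcl (c V) := ⟨w, by rw [hV]; exact hw, hzw⟩
        rw [habs V, hV] at h1; exact h1
      have hBV : B ⊆ V := fun b hb => hVdown b y hyV (hy hb)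
      have h2 : x ∈ c V := hc.2 hBV hxcB
      rw [hV] at h2
      exact hxV h2
    exact ⟨B, ⟨hBA, x, hlub, hxcB⟩, hlub⟩
  · rintro ⟨B, ⟨hBA, s, hs, hscB⟩, hx⟩
    refine ⟨B, hBA, ?_, hx.1⟩
    have h1 : x ∈ dcl (c B) := ⟨s, hscB, hx.2 hs.1⟩
    rwa [habs B] at h1
end

section
/- Let (E, ≤, c) be an enriched qoset. Then (c↑)° = (c°)↑, where c°(A) = ⋃{c(F) : F a finite subset of A}. If moreover every principal order-ideal ↓x of E is finite, or c is finitary, then c↑ is finitary and c↑(A) = ⋃{c(F) ∩ F↑ : F a finite subset of A} for all A; and if in addition c separates points, then c↑(A) = ⋃{F^∨ : F a finite subset of A having a c-sup} for all A. -/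
/-- The finitary part `c°` of a preclosure operator. -/
def findeg {E : Type*} (c : Set E → Set E) : Set E → Set E :=
  fun A => ⋃ (F : Set E) (_ : F ⊆ A ∧ F.Finite), c F

/-- A preclosure operator is finitary if it coincides with its finitary part. -/
def Finitary {E : Type*} (c : Set E → Set E) : Prop :=
  ∀ A : Set E, c A = ⋃ (F : Set E) (_ : F ⊆ A ∧ F.Finite), c F

/-- Characterization of the convolution with the upper-closure operator. -/
theorem cnv_ucl_mem {E : Type*} [Preorder E] (c : Set E → Set E)
    (hmono : ∀ ⦃A B : Set E⦄, A ⊆ B → c A ⊆ c B) (A : Set E) (x : E) :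
    x ∈ cnv c ucl A ↔ x ∈ c (A ∩ Set.Iic x) := by
  constructor
  · intro hx
    have h := Set.mem_iInter.1 hx (A ∩ Set.Iic x)
    rcases h with h | h
    · have : A ∩ (A ∩ Set.Iic x) = A ∩ Set.Iic x :=
        Set.inter_eq_self_of_subset_right Set.inter_subset_left
      rwa [this] at h
    · rcases h with ⟨a, ⟨haA, hax⟩, hle⟩
      exact absurd ⟨haA, hle⟩ hax
  · intro hx
    refine Set.mem_iInter.2 fun B => ?_
    by_cases h : ∃ a ∈ A \ B, a ≤ x
    · exact Or.inr h
    · refine Or.inl (hmono ?_ hx)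
      rintro a ⟨haA, hax⟩
      refine ⟨haA, ?_⟩
      by_contra hB
      exact h ⟨a, ⟨haA, hB⟩, hax⟩

theorem findeg_mem {E : Type*} (c : Set E → Set E) (A : Set E) (x : E) :
    x ∈ findeg c A ↔ ∃ F : Set E, (F ⊆ A ∧ F.Finite) ∧ x ∈ c F := by
  simp [findeg]

theorem findeg_mono {E : Type*} (c : Set E → Set E) ⦃A B : Set E⦄ (h : A ⊆ B) :
    findeg c A ⊆ findeg c B := by
  intro x hx
  rcases (findeg_mem c A x).1 hx with ⟨F, ⟨hFA, hFfin⟩, hxF⟩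
  exact (findeg_mem c B x).2 ⟨F, ⟨hFA.trans h, hFfin⟩, hxF⟩

/-- In an enriched qoset, `(c↑)° = (c°)↑`; if every principal order-ideal is finite or
`c` is finitary, then `c↑` is finitary and given by finite subsets, and if moreover `c`
separates points then `c↑(A)` is the union of the sets of suprema of the finite subsets
of `A` having a `c`-sup. -/
theorem cnv_up_finitary {E : Type*} [Preorder E] (c : Set E → Set E)
    (hc : IsPreclosure c) (habs : ∀ A : Set E, dcl (c A) = c A) :
    findeg (cnv c ucl) = cnv (findeg c) ucl ∧
    (((∀ x : E, (Set.Iic x).Finite) ∨ Finitary c) →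
      (Finitary (cnv c ucl) ∧
       (∀ A : Set E, cnv c ucl A =
          ⋃ (F : Set E) (_ : F ⊆ A ∧ F.Finite), (c F ∩ upperBounds F)) ∧
       (SepPoints c → ∀ A : Set E, cnv c ucl A =
          ⋃ (F : Set E) (_ : F ⊆ A ∧ F.Finite ∧ ∃ s : E, IsLUB F s ∧ s ∈ c F),
            {x : E | IsLUB F x}))) := by
  obtain ⟨hext, hmono⟩ := hc
  -- characterization of d := cnv c ucl
  have hchar : ∀ (A : Set E) (x : E), x ∈ cnv c ucl A ↔ x ∈ c (A ∩ Set.Iic x) :=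
    cnv_ucl_mem c hmono
  have hdmono : ∀ ⦃A B : Set E⦄, A ⊆ B → cnv c ucl A ⊆ cnv c ucl B := by
    intro A B h x hx
    exact (hchar B x).2 (hmono (Set.inter_subset_inter_left _ h) ((hchar A x).1 hx))
  -- Part 1
  have part1 : findeg (cnv c ucl) = cnv (findeg c) ucl := by
    funext A
    ext x
    rw [findeg_mem, cnv_ucl_mem (findeg c) (findeg_mono c), findeg_mem]
    constructor
    · rintro ⟨F, ⟨hFA, hFfin⟩, hx⟩
      rw [hchar] at hx
      exact ⟨F ∩ Set.Iic x, ⟨Set.inter_subset_inter_left _ hFA,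
        hFfin.subset Set.inter_subset_left⟩, hx⟩
    · rintro ⟨G, ⟨hGA, hGfin⟩, hx⟩
      refine ⟨G, ⟨fun a ha => (hGA ha).1, hGfin⟩, ?_⟩
      rw [hchar]
      rwa [Set.inter_eq_self_of_subset_left (fun a ha => (hGA ha).2)]
  refine ⟨part1, fun hfin => ?_⟩
  -- core: membership comes from a finite subset below x
  have hcore : ∀ (A : Set E) (x : E), x ∈ cnv c ucl A →
      ∃ G : Set E, G ⊆ A ∧ G.Finite ∧ G ⊆ Set.Iic x ∧ x ∈ c G := by
    intro A x hx
    rw [hchar] at hx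
    rcases hfin with h | h
    · exact ⟨A ∩ Set.Iic x, Set.inter_subset_left,
        (h x).inter_of_right A, Set.inter_subset_right, hx⟩
    · rw [h (A ∩ Set.Iic x)] at hx
      rcases (findeg_mem c _ x).1 hx with ⟨G, ⟨hGA, hGfin⟩, hxG⟩
      exact ⟨G, fun a ha => (hGA ha).1, hGfin, fun a ha => (hGA ha).2, hxG⟩
  -- a reusable "from finite witness" direction
  have hback : ∀ (A F : Set E) (x : E), F ⊆ A → x ∈ c F → x ∈ upperBounds F →
      x ∈ cnv c ucl A := by
    intro A F x hFA hxF hub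
    rw [hchar]
    have hsub : F ⊆ A ∩ Set.Iic x := fun a ha => ⟨hFA ha, hub ha⟩
    exact hmono hsub hxF
  constructor
  · -- Finitary (cnv c ucl)
    intro A
    apply Set.Subset.antisymm
    · intro x hx
      rcases hcore A x hx with ⟨G, hGA, hGfin, hGle, hxG⟩
      refine (findeg_mem _ A x).2 ⟨G, ⟨hGA, hGfin⟩, ?_⟩
      rw [hchar]
      rwa [Set.inter_eq_self_of_subset_left hGle]
    · intro x hx
      rcases (findeg_mem _ A x).1 hx with ⟨F, ⟨hFA, _⟩, hxF⟩
      exact hdmono hFA hxF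
  refine ⟨fun A => ?_, fun hsep A => ?_⟩
  · -- finite-subset form
    apply Set.Subset.antisymm
    · intro x hx
      rcases hcore A x hx with ⟨G, hGA, hGfin, hGle, hxG⟩
      have hub : x ∈ upperBounds G := fun a ha => hGle ha
      exact Set.mem_iUnion₂.2 ⟨G, ⟨hGA, hGfin⟩, hxG, hub⟩
    · intro x hx
      rcases Set.mem_iUnion₂.1 hx with ⟨F, ⟨hFA, _⟩, hxF, hub⟩
      exact hback A F x hFA hxF hub
  · -- sup form
    apply Set.Subset.antisymm
    · intro x hx
      rcases hcore A x hx with ⟨G, hGA, hGfin, hGle, hxG⟩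
      have hub : x ∈ upperBounds G := fun a ha => hGle ha
      have hlub : IsLUB G x := by
        refine ⟨hub, fun y hy => ?_⟩
        by_contra hxy
        rcases hsep x y hxy with ⟨V, hV, hyV, hxV⟩
        have hVd : dcl V = V := by rw [← hV]; exact habs V
        have hGV : G ⊆ V := by
          intro a ha
          rw [← hVd]
          exact ⟨y, hyV, hy ha⟩
        exact hxV (hV ▸ hmono hGV hxG)
      exact Set.mem_iUnion₂.2 ⟨G, ⟨hGA, hGfin, x, hlub, hxG⟩, hlub⟩
    · intro x hx
      rcases Set.mem_iUnion₂.1 hx with ⟨F, ⟨hFA, _, s, hs, hsc⟩, hxlub⟩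
      have hxs : x ≤ s := hxlub.2 hs.1
      have hxc : x ∈ c F := by
        rw [← habs F]
        exact ⟨s, hsc, hxs⟩
      exact hback A F x hFA hxc hxlub.1
end

section
/- Let (E, ≤, c) be an enriched qoset and x ∈ E. The following are equivalent: (1) x is a c-compact point of E; (2) x ∈ c(B) implies x ∈ ↓B, for all B ⊆ E; (3) E \ ↑x is c-closed; (4) E \ ↑x is the unique c-copoint of x. Each of these conditions implies (5): x has a unique c-copoint. Moreover, if c is preinductive and separates points, then all five conditions are equivalent. -/
/-- `V` is a `c`-copoint of `x`: a maximal `c`-closed subset not containing `x`. -/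
def IsCopoint {E : Type*} (c : Set E → Set E) (x : E) (V : Set E) : Prop :=
  c V = V ∧ x ∉ V ∧ ∀ W : Set E, c W = W → x ∉ W → V ⊆ W → W = V

/-- `c` is preinductive: every `c`-closed subset not containing `x` is contained in some
`c`-copoint of `x`. -/
def Preinductive {E : Type*} (c : Set E → Set E) : Prop :=
  ∀ (x : E) (V : Set E), c V = V → x ∉ V → ∃ W : Set E, V ⊆ W ∧ IsCopoint c x W

/-- Characterization of `c`-compact points of an enriched qoset `E`:
(1) `x ∉ c(E \ ↑x)`; (2) `x ∈ c B → x ∈ ↓B`; (3) `E \ ↑x` is `c`-closed;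
(4) `E \ ↑x` is the unique `c`-copoint of `x` — these are all equivalent, and each implies
(5) `x` has a unique `c`-copoint; if `c` is preinductive and separates points then
(5) is equivalent to the others. -/
theorem compact_point_characterization {E : Type*} [Preorder E] (c : Set E → Set E)
    (hc : IsPreclosure c) (habs : ∀ A : Set E, dcl (c A) = c A) (x : E) :
    ([x ∉ c (Set.univ \ Set.Ici x),
      ∀ B : Set E, x ∈ c B → x ∈ dcl B,
      c (Set.univ \ Set.Ici x) = Set.univ \ Set.Ici x,
      IsCopoint c x (Set.univ \ Set.Ici x) ∧
        ∀ V : Set E, IsCopoint c x V → V = Set.univ \ Set.Ici x].TFAE) ∧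
    (x ∉ c (Set.univ \ Set.Ici x) → ∃! V : Set E, IsCopoint c x V) ∧
    (Preinductive c → SepPoints c →
      ((∃! V : Set E, IsCopoint c x V) → x ∉ c (Set.univ \ Set.Ici x))) := by
  obtain ⟨hsub, hmono⟩ := hc
  set U : Set E := Set.univ \ Set.Ici x with hU
  have hxU : x ∉ U := fun h => h.2 le_rfl
  have hdown : ∀ (A : Set E) (y z : E), y ≤ z → z ∈ c A → y ∈ c A := by
    intro A y z hyz hz
    rw [← habs A]; exact ⟨z, hz, hyz⟩
  have hVsub : ∀ V : Set E, c V = V → x ∉ V → V ⊆ U := by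
    intro V hV hxV v hv
    refine ⟨trivial, fun hle => hxV ?_⟩
    have := hdown V x v hle (hV ▸ hsub V hv)
    rwa [hV] at this
  have htfae : [x ∉ c (Set.univ \ Set.Ici x),
      ∀ B : Set E, x ∈ c B → x ∈ dcl B,
      c (Set.univ \ Set.Ici x) = Set.univ \ Set.Ici x,
      IsCopoint c x (Set.univ \ Set.Ici x) ∧
        ∀ V : Set E, IsCopoint c x V → V = Set.univ \ Set.Ici x].TFAE := by
    tfae_have 1 → 2 := by
      intro h1 B hB
      by_contra hnot
      exact h1 (hmono (show B ⊆ U from fun b hb => ⟨trivial, fun hle => hnot ⟨b, hb, hle⟩⟩) hB)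
    tfae_have 2 → 3 := by
      intro h2
      apply Set.Subset.antisymm _ (hsub U)
      intro y hy
      refine ⟨trivial, fun hle => ?_⟩
      obtain ⟨a, ha, hxa⟩ := h2 U (hdown U x y hle hy)
      exact ha.2 hxa
    tfae_have 3 → 4 := by
      intro h3
      have hcop : IsCopoint c x U :=
        ⟨h3, hxU, fun W hW hxW hUW => Set.Subset.antisymm (hVsub W hW hxW) hUW⟩
      exact ⟨hcop, fun V hV => (hV.2.2 U h3 hxU (hVsub V hV.1 hV.2.1)).symm⟩
    tfae_have 4 → 1 := by
      intro h4
      rw [h4.1.1]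
      exact hxU
    tfae_finish
  refine ⟨htfae, ?_, ?_⟩
  · intro h1
    obtain ⟨hcop, huniq⟩ := (htfae.out 0 3).mp h1
    exact ⟨U, hcop, huniq⟩
  · intro hpre hsep ⟨V, hV, huniq⟩ hx
    have hUV : U ⊆ V := by
      intro y hy
      obtain ⟨W, hW, hyW, hxW⟩ := hsep x y (fun h => hy.2 h)
      obtain ⟨V', hWV', hV'⟩ := hpre x W hW hxW
      exact huniq V' hV' ▸ hWV' hyW
    exact hV.2.1 (hV.1 ▸ hmono hUV hx)
end

section
/- Let (E, ≤, c) be an enriched qoset and A ⊆ E. Then ex_c A = cp_c A ∩ Max A, where Max A is the set of maximal elements of A. Moreover, for x ∈ A: x ∈ ex_c A if and only if (x ∈ c(B) implies x ∈ [B], for all B ⊆ A); if A \ [x] is c-closed then x ∈ ex_c A; and if A is c-closed, then x ∈ ex_c A if and only if A \ [x] is c-closed. -/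
/-- Order-equivalence `x ∼ y` in a qoset. -/
def eqv {E : Type*} [Preorder E] (x y : E) : Prop := x ≤ y ∧ y ≤ x

/-- The order-equivalence class `[x]` of `x`. -/
def cls {E : Type*} [Preorder E] (x : E) : Set E := {y | eqv y x}

/-- The order-saturation `[A]` of a subset `A`. -/
def clsSet {E : Type*} [Preorder E] (A : Set E) : Set E := {y | ∃ a ∈ A, eqv y a}

/-- The set of `c`-compact points of `A`: points `x ∈ A` with `x ∉ c (A \ ↑x)`. -/
def cpC {E : Type*} [Preorder E] (c : Set E → Set E) (A : Set E) : Set E :=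
  {x | x ∈ A ∧ x ∉ c (A \ Set.Ici x)}

/-- The set of `c`-extreme points of `A`: points `x ∈ A` with `x ∉ c (A \ [x])`. -/
def exC {E : Type*} [Preorder E] (c : Set E → Set E) (A : Set E) : Set E :=
  {x | x ∈ A ∧ x ∉ c (A \ cls x)}

/-- The set of maximal elements of `A`. -/
def maxSet {E : Type*} [Preorder E] (A : Set E) : Set E :=
  {x | x ∈ A ∧ ∀ y ∈ A, x ≤ y → eqv y x}

/-- In an enriched qoset, `ex_c A = cp_c A ∩ Max A`; moreover, for `x ∈ A`:
`x` is `c`-extreme iff `x ∈ c B → x ∈ [B]` for all `B ⊆ A`; if `A \ [x]` is `c`-closed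
then `x` is `c`-extreme; and if `A` is `c`-closed, `x` is `c`-extreme iff `A \ [x]` is
`c`-closed. -/
theorem extreme_point_characterization {E : Type*} [Preorder E] (c : Set E → Set E)
    (hc : IsPreclosure c) (habs : ∀ A : Set E, dcl (c A) = c A) (A : Set E) :
    exC c A = cpC c A ∩ maxSet A ∧
    ∀ x ∈ A,
      (x ∈ exC c A ↔ ∀ B : Set E, B ⊆ A → x ∈ c B → x ∈ clsSet B) ∧
      (c (A \ cls x) = A \ cls x → x ∈ exC c A) ∧
      (c A = A → (x ∈ exC c A ↔ c (A \ cls x) = A \ cls x)) := by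
  obtain ⟨hext, hmono⟩ := hc
  have hdn : ∀ (S : Set E) (x y : E), x ≤ y → y ∈ c S → x ∈ c S := by
    intro S x y hxy hy
    rw [← habs S]; exact ⟨y, hy, hxy⟩
  constructor
  · ext x
    constructor
    · rintro ⟨hxA, hx⟩
      refine ⟨⟨hxA, fun h => hx (hmono (by rintro y ⟨h1, h2⟩; exact ⟨h1, fun hyc => h2 hyc.2⟩) h)⟩,
        hxA, fun y hyA hxy => ?_⟩
      by_contra hne
      exact hx (hdn _ x y hxy (hext _ ⟨hyA, hne⟩))
    · rintro ⟨⟨hxA, hx⟩, _, hmax⟩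
      refine ⟨hxA, fun h => hx (hmono ?_ h)⟩
      rintro y ⟨hyA, hy⟩
      exact ⟨hyA, fun hxy => hy (hmax y hyA hxy)⟩
  · intro x hxA
    have h3 : c (A \ cls x) = A \ cls x → x ∈ exC c A := by
      intro hcl
      exact ⟨hxA, fun h => (hcl ▸ h).2 ⟨le_refl x, le_refl x⟩⟩
    refine ⟨⟨?_, ?_⟩, h3, fun hA => ⟨?_, h3⟩⟩
    · rintro ⟨_, hx⟩ B hBA hxB
      by_contra hnx
      exact hx (hmono (by rintro b hb; exact ⟨hBA hb, fun hbc => hnx ⟨b, hb, hbc.2, hbc.1⟩⟩) hxB)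
    · intro h
      refine ⟨hxA, fun hx => ?_⟩
      obtain ⟨a, ha, hax⟩ := h (A \ cls x) (fun y hy => hy.1) hx
      exact ha.2 ⟨hax.2, hax.1⟩
    · rintro ⟨_, hx⟩
      refine Set.Subset.antisymm (fun y hy => ?_) (hext _)
      have hyA : y ∈ A := hA ▸ hmono (fun z hz => hz.1) hy
      exact ⟨hyA, fun hyc => hx (hdn _ x y hyc.2 hy)⟩
end

section
/- Let (E, ≤, c) be an enriched qoset, A ⊆ E and x ∈ A. The following are equivalent: (1) x ∈ ex_{c↑} A; (2) x ∈ ex_c(A \ U) for some upper subset U of E; (3) x ∈ ex_c(A ∩ ↓x); (4) for every B ⊆ A, x ∈ c(B) ∩ B↑ implies x ∈ [B]. Each of these implies: (5) for every finite F ⊆ A, x ∈ c(F) ∩ F↑ implies x ∈ [F]. If c is finitary, (5) implies (4). If c separates points and is finitary, then (1)–(5) are also equivalent to: (6) for every finite F ⊆ A having a c-sup, x ∈ F^∨ implies x ∈ [F]. -/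
/-- Characterization of `c↑`-extreme points of a subset `A` of an enriched qoset. -/
theorem cnv_up_extreme_point_characterization {E : Type*} [Preorder E] (c : Set E → Set E)
    (hc : IsPreclosure c) (habs : ∀ A : Set E, dcl (c A) = c A) (A : Set E) (x : E)
    (hxA : x ∈ A) :
    ([x ∈ exC (cnv c ucl) A,
      ∃ U : Set E, (∀ a ∈ U, ∀ b : E, a ≤ b → b ∈ U) ∧ x ∈ exC c (A \ U),
      x ∈ exC c (A ∩ Set.Iic x),
      ∀ B : Set E, B ⊆ A → x ∈ c B ∩ upperBounds B → x ∈ clsSet B].TFAE) ∧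
    ((∀ B : Set E, B ⊆ A → x ∈ c B ∩ upperBounds B → x ∈ clsSet B) →
      (∀ F : Set E, F ⊆ A → F.Finite → x ∈ c F ∩ upperBounds F → x ∈ clsSet F)) ∧
    (Finitary c →
      ((∀ F : Set E, F ⊆ A → F.Finite → x ∈ c F ∩ upperBounds F → x ∈ clsSet F) →
        (∀ B : Set E, B ⊆ A → x ∈ c B ∩ upperBounds B → x ∈ clsSet B))) ∧
    (SepPoints c → Finitary c →
      (x ∈ exC (cnv c ucl) A ↔
        ∀ F : Set E, F ⊆ A → F.Finite → (∃ s : E, IsLUB F s ∧ s ∈ c F) →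
          IsLUB F x → x ∈ clsSet F)) := by
  obtain ⟨hsub, hmono⟩ := hc
  -- (1) → (2)
  have h12 : x ∈ exC (cnv c ucl) A →
      ∃ U : Set E, (∀ a ∈ U, ∀ b : E, a ≤ b → b ∈ U) ∧ x ∈ exC c (A \ U) := by
    rintro ⟨hA, hnc⟩
    simp only [cnv, Set.mem_iInter, Set.mem_union, not_forall, not_or] at hnc
    obtain ⟨B, hcB, huB⟩ := hnc
    refine ⟨ucl ((A \ cls x) \ B), ?_, ⟨⟨hA, huB⟩, ?_⟩⟩
    · rintro a ⟨s, hs, hsa⟩ b hab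
      exact ⟨s, hs, hsa.trans hab⟩
    · intro hx
      apply hcB
      refine hmono ?_ hx
      rintro y ⟨⟨hyA, hyU⟩, hycls⟩
      refine ⟨⟨hyA, hycls⟩, ?_⟩
      by_contra hyB
      exact hyU ⟨y, ⟨⟨hyA, hycls⟩, hyB⟩, le_refl y⟩
  -- (2) → (3)
  have h23 : (∃ U : Set E, (∀ a ∈ U, ∀ b : E, a ≤ b → b ∈ U) ∧ x ∈ exC c (A \ U)) →
      x ∈ exC c (A ∩ Set.Iic x) := by
    rintro ⟨U, hU, ⟨⟨hA, hxU⟩, hnc⟩⟩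
    refine ⟨⟨hA, le_refl x⟩, fun hx => hnc (hmono ?_ hx)⟩
    rintro y ⟨⟨hyA, hyx⟩, hycls⟩
    exact ⟨⟨hyA, fun hyU => hxU (hU y hyU x hyx)⟩, hycls⟩
  -- (3) → (4)
  have h34 : x ∈ exC c (A ∩ Set.Iic x) →
      ∀ B : Set E, B ⊆ A → x ∈ c B ∩ upperBounds B → x ∈ clsSet B := by
    rintro ⟨-, hnc⟩ B hBA ⟨hxc, hxub⟩
    by_contra hx
    have hsubB : B ⊆ (A ∩ Set.Iic x) \ cls x := by
      intro b hb
      exact ⟨⟨hBA hb, hxub hb⟩, fun hbc => hx ⟨b, hb, hbc.2, hbc.1⟩⟩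
    exact hnc (hmono hsubB hxc)
  -- (4) → (1)
  have h41 : (∀ B : Set E, B ⊆ A → x ∈ c B ∩ upperBounds B → x ∈ clsSet B) →
      x ∈ exC (cnv c ucl) A := by
    intro h4
    refine ⟨hxA, fun hx => ?_⟩
    rw [cnv] at hx
    simp only [Set.mem_iInter, Set.mem_union] at hx
    rcases hx (Set.Iic x) with hc' | hu
    · have hub : x ∈ upperBounds ((A \ cls x) ∩ Set.Iic x) := fun b hb => hb.2
      obtain ⟨b, hb, hxb, hbx⟩ := h4 _ (fun b hb => hb.1.1) ⟨hc', hub⟩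
      exact hb.1.2 ⟨hbx, hxb⟩
    · obtain ⟨b, hb, hbx⟩ := hu
      exact hb.2 hbx
  -- (4) → (5)
  have h45 : (∀ B : Set E, B ⊆ A → x ∈ c B ∩ upperBounds B → x ∈ clsSet B) →
      ∀ F : Set E, F ⊆ A → F.Finite → x ∈ c F ∩ upperBounds F → x ∈ clsSet F :=
    fun h4 F hFA _ => h4 F hFA
  -- Finitary: (5) → (4)
  have h54 : Finitary c →
      (∀ F : Set E, F ⊆ A → F.Finite → x ∈ c F ∩ upperBounds F → x ∈ clsSet F) →
      ∀ B : Set E, B ⊆ A → x ∈ c B ∩ upperBounds B → x ∈ clsSet B := by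
    rintro hfin h5 B hBA ⟨hxc, hub⟩
    rw [hfin B] at hxc
    simp only [Set.mem_iUnion] at hxc
    obtain ⟨F, ⟨hFB, hFfin⟩, hxcF⟩ := hxc
    obtain ⟨b, hb, he⟩ := h5 F (hFB.trans hBA) hFfin ⟨hxcF, fun y hy => hub (hFB hy)⟩
    exact ⟨b, hFB hb, he⟩
  refine ⟨?_, h45, h54, ?_⟩
  · tfae_have 1 → 2 := h12
    tfae_have 2 → 3 := h23
    tfae_have 3 → 4 := h34
    tfae_have 4 → 1 := h41
    tfae_finish
  · intro hsep hfin
    constructor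
    · intro h1 F hFA hFfin hs hlx
      obtain ⟨s, hls, hsc⟩ := hs
      have hxs : x ≤ s := hlx.2 hls.1
      have hxc : x ∈ c F := by
        rw [← habs F]
        exact ⟨s, hsc, hxs⟩
      exact h34 (h23 (h12 h1)) F hFA ⟨hxc, hlx.1⟩
    · intro h6
      apply h41
      apply h54 hfin
      rintro F hFA hFfin ⟨hxc, hub⟩
      have hlub : IsLUB F x := by
        refine ⟨hub, fun y hy => ?_⟩
        by_contra hxy
        obtain ⟨V, hV, hyV, hxV⟩ := hsep x y hxy
        have hVlow : dcl V = V := hV ▸ habs V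
        have hFV : F ⊆ V := fun f hf => hVlow ▸ (⟨y, hyV, hy hf⟩ : f ∈ dcl V)
        exact hxV (hV ▸ hmono hFV hxc)
      exact h6 F hFA hFfin ⟨x, hlub, hxc⟩ hlub
end

section
/- Let c and s be preclosure operators on a set E. If c is local and idempotent and s is finitary, then the convolution c*s is finitary. -/
/-- `c` is local: at every point `x`, every `c`-closed subset not containing `x` is
contained in some `c`-copoint of `x`, and `x` has finitely many `c`-copoints. -/
def LocalOp {E : Type*} (c : Set E → Set E) : Prop :=
  ∀ x : E, (∀ V : Set E, c V = V → x ∉ V → ∃ W : Set E, V ⊆ W ∧ IsCopoint c x W) ∧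
    {V : Set E | IsCopoint c x V}.Finite

/-- If `c` is a local idempotent preclosure operator and `s` is a finitary preclosure
operator, then the convolution `c * s` is finitary. -/
theorem convolution_finitary_of_local {E : Type*} (c s : Set E → Set E)
    (hc : IsPreclosure c) (hcid : ∀ A : Set E, c (c A) = c A) (hcloc : LocalOp c)
    (hs : IsPreclosure s) (hsfin : Finitary s) :
    Finitary (cnv c s) := by
  classical
  intro A
  ext x
  simp only [Set.mem_iUnion, cnv, Set.mem_iInter]
  constructor
  · intro hx
    have hcop : ∀ D : Set E, x ∉ c D → ∃ W, IsCopoint c x W ∧ D ⊆ W := by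
      intro D hD
      obtain ⟨W, hsub, hW⟩ := (hcloc x).1 (c D) (hcid D) hD
      exact ⟨W, hW, (hc.1 D).trans hsub⟩
    have hmem : ∀ W : Set E, IsCopoint c x W → x ∈ s (A \ W) := by
      intro W hW
      rcases hx (A ∩ W) with h | h
      · exfalso
        have hsub : c (A ∩ (A ∩ W)) ⊆ W := by
          have : c (A ∩ (A ∩ W)) ⊆ c W := hc.2 (by intro y hy; exact hy.2.2)
          rw [hW.1] at this; exact this
        exact hW.2.1 (hsub h)
      · have heq : A \ (A ∩ W) = A \ W := by
          ext y; simp only [Set.mem_diff, Set.mem_inter_iff]; tauto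
        rwa [heq] at h
    have hex : ∀ W : Set E, ∃ F : Set E, IsCopoint c x W →
        F ⊆ A \ W ∧ F.Finite ∧ x ∈ s F := by
      intro W
      by_cases hW : IsCopoint c x W
      · have h := hmem W hW
        rw [hsfin (A \ W)] at h
        simp only [Set.mem_iUnion] at h
        obtain ⟨F, hF, hxF⟩ := h
        exact ⟨F, fun _ => ⟨hF.1, hF.2, hxF⟩⟩
      · exact ⟨∅, fun h => absurd h hW⟩
    choose f hf using hex
    refine ⟨⋃ W ∈ {V : Set E | IsCopoint c x V}, f W, ⟨?_, ?_⟩, ?_⟩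
    · intro y hy
      simp only [Set.mem_iUnion] at hy
      obtain ⟨W, hW, hy⟩ := hy
      exact ((hf W hW).1 hy).1
    · exact Set.Finite.biUnion (hcloc x).2 fun W hW => (hf W hW).2.1
    · intro B
      by_cases hb : x ∈ c ((⋃ W ∈ {V : Set E | IsCopoint c x V}, f W) ∩ B)
      · exact Or.inl hb
      · obtain ⟨W, hW, hsub⟩ := hcop _ hb
        right
        refine hs.2 (show f W ⊆ (⋃ W ∈ {V : Set E | IsCopoint c x V}, f W) \ B from ?_)
          ((hf W hW).2.2)
        intro y hy
        refine ⟨Set.mem_biUnion hW hy, fun hyB => ?_⟩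
        have hyW : y ∈ W := hsub ⟨Set.mem_biUnion hW hy, hyB⟩
        exact ((hf W hW).1 hy).2 hyW
  · rintro ⟨F, ⟨hFA, _⟩, hxF⟩
    intro B
    rcases hxF B with h | h
    · exact Or.inl (hc.2 (Set.inter_subset_inter_left B hFA) h)
    · exact Or.inr (hs.2 (Set.diff_subset_diff_left hFA) h)
end

section
/- Let c be a topological closure operator on a set E. Then every x ∈ E has at most one c-copoint, and the following are equivalent: (1) c is preinductive; (2) every x ∈ E has exactly one c-copoint; (3) c is an Alexandrov closure operator, i.e. there exists a reflexive transitive relation ≤ on E such that c(A) = ↓A = {z : ∃a ∈ A, z ≤ a} for all subsets A. -/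
/-- For a topological closure operator `c` (idempotent, untied, preserving binary unions),
every point has at most one `c`-copoint, and the following are equivalent:
(1) `c` is preinductive; (2) every point has exactly one `c`-copoint;
(3) `c` is an Alexandrov closure operator, i.e. `c` is the lower-closure operator of some
reflexive transitive relation. -/
theorem topological_closure_copoints {E : Type*} (c : Set E → Set E)
    (hc : IsPreclosure c) (hid : ∀ A : Set E, c (c A) = c A)
    (hempty : c ∅ = ∅) (hunion : ∀ A B : Set E, c (A ∪ B) = c A ∪ c B) :
    (∀ (x : E) (V W : Set E), IsCopoint c x V → IsCopoint c x W → V = W) ∧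
    [Preinductive c,
      ∀ x : E, ∃! V : Set E, IsCopoint c x V,
      ∃ r : E → E → Prop, Reflexive r ∧ Transitive r ∧
        ∀ A : Set E, c A = {z : E | ∃ a ∈ A, r z a}].TFAE := by
  obtain ⟨hsub, hmono⟩ := hc
  have huniq : ∀ (x : E) (V W : Set E), IsCopoint c x V → IsCopoint c x W → V = W := by
    rintro x V W ⟨hV, hxV, hVmax⟩ ⟨hW, hxW, hWmax⟩
    have hclosed : c (V ∪ W) = V ∪ W := by rw [hunion, hV, hW]
    have hx : x ∉ V ∪ W := by
      rintro (h | h)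
      exacts [hxV h, hxW h]
    have h1 := hVmax (V ∪ W) hclosed hx Set.subset_union_left
    have h2 := hWmax (V ∪ W) hclosed hx Set.subset_union_right
    exact h1.symm.trans h2
  refine ⟨huniq, ?_⟩
  tfae_have 1 → 2
  · intro h x
    obtain ⟨W, _, hW⟩ := h x ∅ hempty (Set.notMem_empty x)
    exact ⟨W, hW, fun V hV => huniq x V W hV hW⟩
  tfae_have 2 → 3
  · intro h
    refine ⟨fun z a => z ∈ c {a}, fun a => hsub {a} rfl, ?_, ?_⟩
    · intro z a b hza hab
      exact (hid {b} ▸ hmono (Set.singleton_subset_iff.mpr hab)) hza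
    · intro A
      apply Set.Subset.antisymm
      · intro z hz
        by_contra hcon
        simp only [Set.mem_setOf_eq, not_exists] at hcon
        obtain ⟨V, ⟨hVc, hzV, hVmax⟩, -⟩ := h z
        have hAV : A ⊆ V := by
          intro a ha
          have hclosed : c (V ∪ c {a}) = V ∪ c {a} := by
            rw [hunion, hVc, hid]
          have hz' : z ∉ V ∪ c {a} := by
            rintro (h' | h')
            · exact hzV h'
            · exact hcon a ⟨ha, h'⟩
          have heq := hVmax (V ∪ c {a}) hclosed hz' Set.subset_union_left
          have : a ∈ V ∪ c {a} := Or.inr (hsub {a} rfl)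
          rwa [heq] at this
        exact hzV (hVc ▸ hmono hAV hz)
      · rintro z ⟨a, ha, hza⟩
        exact hmono (Set.singleton_subset_iff.mpr ha) hza
  tfae_have 3 → 1
  · rintro ⟨r, hrefl, htrans, hcA⟩ x V hV hxV
    refine ⟨{y | ¬ r x y}, ?_, ?_, fun h => h (hrefl x), ?_⟩
    · intro y hy hxy
      have : x ∈ c V := by
        rw [hcA]
        exact ⟨y, hy, hxy⟩
      exact hxV (hV ▸ this)
    · apply Set.Subset.antisymm
      · intro z hz
        rw [hcA] at hz
        obtain ⟨y, hy, hzy⟩ := hz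
        exact fun hxz => hy (htrans hxz hzy)
      · exact hsub _
    · intro U hU hxU hWU
      apply Set.Subset.antisymm
      · intro y hy hxy
        have : x ∈ c U := by
          rw [hcA]
          exact ⟨y, hy, hxy⟩
        exact hxU (hU ▸ this)
      · exact hWU
  tfae_finish
end
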